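/- arXiv:1311.6025 — 5 statements merged into one kernel-verified Lean document; each statement's English description precedes it below -/
import Mathlib

section
/- Let β ∈ (1,∞), c ≥ 1, d ≥ 1, and let λ ∈ [2^{−d}, 1−2^{−d}]. Suppose the points P, Q ∈ (0,∞)² and R = λP + (1−λ)Q all lie in Ω_c. Then the whole line segment from P to Q is contained in Ω_{2^{βd}c}. -/
open Set

noncomputable section

/-- The hyperbolic domain `Ω_c = {(w,v) ∈ (0,∞)² : 1 ≤ w v^{β−1} ≤ c}`. -/
def Omega (β c : ℝ) : Set (ℝ × ℝ) :=
  {z | 0 < z.1 ∧ 0 < z.2 ∧ 1 ≤ z.1 * z.2 ^ (β - 1) ∧ z.1 * z.2 ^ (β - 1) ≤ c}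

private lemma convex_pos {a b x y : ℝ} (ha : 0 ≤ a) (hb : 0 ≤ b) (hab : a + b = 1)
    (hx : 0 < x) (hy : 0 < y) : 0 < a * x + b * y := by
  rcases ha.eq_or_lt with rfl | ha'
  · have hb1 : b = 1 := by linarith
    subst hb1; simpa using hy
  · have h1 : 0 < a * x := mul_pos ha' hx
    have h2 : 0 ≤ b * y := mul_nonneg hb hy.le
    linarith

private lemma comb_le {K lam a b x y : ℝ} (hx : 0 < x) (hy : 0 < y)
    (ha : 0 ≤ a) (hb : 0 ≤ b) (hab : a + b = 1)
    (h1 : 1 ≤ K * lam) (h2 : 1 ≤ K * (1 - lam)) :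
    a * x + b * y ≤ K * (lam * x + (1 - lam) * y) := by
  have hx' : x ≤ K * (lam * x + (1 - lam) * y) := by
    nlinarith [mul_nonneg (by linarith : (0:ℝ) ≤ K * lam - 1) hx.le,
      mul_nonneg (by linarith : (0:ℝ) ≤ K * (1 - lam)) hy.le]
  have hy' : y ≤ K * (lam * x + (1 - lam) * y) := by
    nlinarith [mul_nonneg (by linarith : (0:ℝ) ≤ K * (1 - lam) - 1) hy.le,
      mul_nonneg (by linarith : (0:ℝ) ≤ K * lam) hx.le]
  nlinarith [mul_le_mul_of_nonneg_left hx' ha, mul_le_mul_of_nonneg_left hy' hb]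

theorem segment_in_enlarged_domain (β : ℝ) (hβ : 1 < β) (c : ℝ) (hc : 1 ≤ c)
    (d : ℕ) (hd : 1 ≤ d) (lam : ℝ) (hlam : lam ∈ Set.Icc ((2 : ℝ) ^ (-(d : ℝ))) (1 - 2 ^ (-(d : ℝ))))
    (P Q : ℝ × ℝ) (hP : P ∈ Omega β c) (hQ : Q ∈ Omega β c)
    (hR : lam • P + (1 - lam) • Q ∈ Omega β c) :
    segment ℝ P Q ⊆ Omega β (2 ^ (β * d) * c) := by
  obtain ⟨hP1, hP2, hfP1, hfPc⟩ := hP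
  obtain ⟨hQ1, hQ2, hfQ1, hfQc⟩ := hQ
  simp only [Omega, Set.mem_setOf_eq, Prod.fst_add, Prod.snd_add, Prod.smul_fst,
    Prod.smul_snd, smul_eq_mul] at hR
  obtain ⟨hR1, hR2, hfR1, hfRc⟩ := hR
  obtain ⟨hlam1, hlam2⟩ := hlam
  set K : ℝ := (2 : ℝ) ^ (d : ℝ) with hKdef
  have hK0 : 0 < K := Real.rpow_pos_of_pos two_pos _
  have hεK : (2 : ℝ) ^ (-(d : ℝ)) = K⁻¹ := by
    rw [hKdef, ← Real.rpow_neg (by norm_num)]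
  rw [hεK] at hlam1 hlam2
  have h1 : 1 ≤ K * lam := by
    have := mul_le_mul_of_nonneg_left hlam1 hK0.le
    rwa [mul_inv_cancel₀ hK0.ne'] at this
  have h2 : 1 ≤ K * (1 - lam) := by
    have := mul_le_mul_of_nonneg_left (by linarith : K⁻¹ ≤ 1 - lam) hK0.le
    rwa [mul_inv_cancel₀ hK0.ne'] at this
  have hβ1 : (0 : ℝ) ≤ β - 1 := by linarith
  rintro z ⟨a, b, ha, hb, hab, rfl⟩
  simp only [Omega, Set.mem_setOf_eq, Prod.fst_add, Prod.snd_add, Prod.smul_fst,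
    Prod.smul_snd, smul_eq_mul]
  have hw0 : 0 < a * P.1 + b * Q.1 := convex_pos ha hb hab hP1 hQ1
  have hv0 : 0 < a * P.2 + b * Q.2 := convex_pos ha hb hab hP2 hQ2
  refine ⟨hw0, hv0, ?_, ?_⟩
  · -- lower bound via weighted AM-GM
    have hgw : P.1 ^ a * Q.1 ^ b ≤ a * P.1 + b * Q.1 :=
      Real.geom_mean_le_arith_mean2_weighted ha hb hP1.le hQ1.le hab
    have hgv : P.2 ^ a * Q.2 ^ b ≤ a * P.2 + b * Q.2 :=
      Real.geom_mean_le_arith_mean2_weighted ha hb hP2.le hQ2.le hab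
    have key : (P.1 * P.2 ^ (β - 1)) ^ a * (Q.1 * Q.2 ^ (β - 1)) ^ b
        = (P.1 ^ a * Q.1 ^ b) * (P.2 ^ a * Q.2 ^ b) ^ (β - 1) := by
      rw [Real.mul_rpow hP1.le (by positivity), Real.mul_rpow hQ1.le (by positivity),
        Real.mul_rpow (by positivity) (by positivity),
        ← Real.rpow_mul hP2.le, ← Real.rpow_mul hQ2.le,
        ← Real.rpow_mul hP2.le, ← Real.rpow_mul hQ2.le,
        mul_comm a (β - 1), mul_comm b (β - 1)]
      ring
    have hA : 1 ≤ (P.1 * P.2 ^ (β - 1)) ^ a := by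
      have := Real.rpow_le_rpow zero_le_one hfP1 ha
      rwa [Real.one_rpow] at this
    have hB : 1 ≤ (Q.1 * Q.2 ^ (β - 1)) ^ b := by
      have := Real.rpow_le_rpow zero_le_one hfQ1 hb
      rwa [Real.one_rpow] at this
    calc (1 : ℝ) = 1 * 1 := by ring
      _ ≤ (P.1 * P.2 ^ (β - 1)) ^ a * (Q.1 * Q.2 ^ (β - 1)) ^ b :=
          mul_le_mul hA hB zero_le_one (le_trans zero_le_one hA)
      _ = (P.1 ^ a * Q.1 ^ b) * (P.2 ^ a * Q.2 ^ b) ^ (β - 1) := key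
      _ ≤ (a * P.1 + b * Q.1) * (a * P.2 + b * Q.2) ^ (β - 1) := by
          apply mul_le_mul hgw (Real.rpow_le_rpow (by positivity) hgv hβ1)
            (by positivity) hw0.le
  · -- upper bound
    have hwK : a * P.1 + b * Q.1 ≤ K * (lam * P.1 + (1 - lam) * Q.1) :=
      comb_le hP1 hQ1 ha hb hab h1 h2
    have hvK : a * P.2 + b * Q.2 ≤ K * (lam * P.2 + (1 - lam) * Q.2) :=
      comb_le hP2 hQ2 ha hb hab h1 h2
    have hKK : K * K ^ (β - 1) = (2 : ℝ) ^ (β * (d : ℝ)) := by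
      rw [hKdef, ← Real.rpow_mul (by norm_num), ← Real.rpow_add two_pos]
      congr 1
      ring
    calc (a * P.1 + b * Q.1) * (a * P.2 + b * Q.2) ^ (β - 1)
        ≤ (K * (lam * P.1 + (1 - lam) * Q.1)) * (K * (lam * P.2 + (1 - lam) * Q.2)) ^ (β - 1) := by
          apply mul_le_mul hwK (Real.rpow_le_rpow hv0.le hvK hβ1) (by positivity)
            (by positivity)
      _ = (K * K ^ (β - 1)) * ((lam * P.1 + (1 - lam) * Q.1)
            * (lam * P.2 + (1 - lam) * Q.2) ^ (β - 1)) := by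
          rw [Real.mul_rpow hK0.le hR2.le]
          ring
      _ ≤ (2 : ℝ) ^ (β * (d : ℝ)) * c := by
          rw [hKK]
          have h2β : (0 : ℝ) < (2 : ℝ) ^ (β * (d : ℝ)) := Real.rpow_pos_of_pos two_pos _
          exact mul_le_mul_of_nonneg_left hfRc h2β.le
  done

end
end

section
/- Let β ∈ (1,∞), c ≥ 1, d ≥ 1, and let B be any locally concave function on Ω_{2^{βd}c}. If P₁, P₂, …, P_{2^d} are points of Ω_c and their average P = 2^{−d}(P₁ + P₂ + … + P_{2^d}) also lies in Ω_c, then B(P) ≥ 2^{−d} Σ_{k=1}^{2^d} B(P_k). -/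
open Set Finset

noncomputable section

/-- A function on a subset of `ℝ²` is locally concave if it is concave along every
line segment contained in its domain. -/
def LocallyConcaveOn (S : Set (ℝ × ℝ)) (B : ℝ × ℝ → ℝ) : Prop :=
  ∀ P Q : ℝ × ℝ, P ∈ S → Q ∈ S → segment ℝ P Q ⊆ S → ConcaveOn ℝ (segment ℝ P Q) B

/-!
Split the `2^(d+1)` points into two halves of `2^d` points with averages `A` and `A'`, so that
the total average is the midpoint `M` of `A` and `A'`. The region `{1 ≤ w v^{β-1}}` is convex, so
`A` and `A'` lie in it, and the whole segment `[A, A']` lies below `A + A' = 2M` in both coordinates;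
hence `w v^{β-1} ≤ 2^β c` on it. Concavity of `B` on `[A, A']` at its midpoint and induction on
the two halves, in `Ω_{2^β c}`, give the claim; the domain of local concavity grows by the factor
`2^β` at each of the `d` halvings.
-/

def OmegaInf (β : ℝ) : Set (ℝ × ℝ) :=
  {z | 0 < z.1 ∧ 0 < z.2 ∧ 1 ≤ z.1 * z.2 ^ (β - 1)}

theorem Omega_subset_OmegaInf (β c : ℝ) : Omega β c ⊆ OmegaInf β :=
  fun _ hz => ⟨hz.1, hz.2.1, hz.2.2.1⟩

theorem Omega_subset_Omega_mul (β c : ℝ) {t : ℝ} (ht : 1 ≤ t) : Omega β c ⊆ Omega β (t * c) :=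
  fun _ ⟨h₁, h₂, hlo, hhi⟩ => ⟨h₁, h₂, hlo, hhi.trans (le_mul_of_one_le_left (by linarith) ht)⟩

-- `OmegaInf β` is the superlevel set `{0 ≤ log w + (β - 1) log v}` of a concave function.
theorem convex_OmegaInf {β : ℝ} (hβ : 1 ≤ β) : Convex ℝ (OmegaInf β) := by
  have hquad : Convex ℝ (Set.Ioi (0 : ℝ) ×ˢ Set.Ioi (0 : ℝ)) := (convex_Ioi 0).prod (convex_Ioi 0)
  have hlog (L : ℝ × ℝ →ₗ[ℝ] ℝ) (hL : Set.Ioi 0 ×ˢ Set.Ioi 0 ⊆ L ⁻¹' Set.Ioi 0) :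
      ConcaveOn ℝ (Set.Ioi 0 ×ˢ Set.Ioi 0) (Real.log ∘ L) :=
    (strictConcaveOn_log_Ioi.concaveOn.comp_linearMap L).subset hL hquad
  have hg : ConcaveOn ℝ (Set.Ioi 0 ×ˢ Set.Ioi 0)
      (fun z : ℝ × ℝ => Real.log z.1 + (β - 1) • Real.log z.2) :=
    (hlog (LinearMap.fst ℝ ℝ ℝ) fun _ hz => hz.1).add
      ((hlog (LinearMap.snd ℝ ℝ ℝ) fun _ hz => hz.2).smul (by linarith))
  have hiff {w v : ℝ} (hw : 0 < w) (hv : 0 < v) :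
      1 ≤ w * v ^ (β - 1) ↔ 0 ≤ Real.log w + (β - 1) • Real.log v := by
    rw [smul_eq_mul, ← Real.log_rpow hv, ← Real.log_mul hw.ne' (by positivity),
      Real.log_nonneg_iff (by positivity)]
  convert hg.convex_ge 0 using 1
  ext z
  exact ⟨fun ⟨h₁, h₂, h⟩ => ⟨⟨h₁, h₂⟩, (hiff h₁ h₂).1 h⟩,
    fun ⟨⟨h₁, h₂⟩, h⟩ => ⟨h₁, h₂, (hiff h₁ h₂).2 h⟩⟩

theorem mul_mul_mul_rpow_sub_one {β t w v : ℝ} (ht : 0 < t) (hv : 0 ≤ v) :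
    (t * w) * (t * v) ^ (β - 1) = t ^ β * (w * v ^ (β - 1)) := by
  rw [Real.mul_rpow ht.le hv, Real.rpow_sub_one ht.ne']
  field_simp

theorem mem_Omega_of_le_smul {β c t : ℝ} (hβ : 1 ≤ β) (ht : 0 < t) {x M : ℝ × ℝ}
    (hM : M ∈ Omega β c) (hx : x ∈ OmegaInf β) (hxM : x ≤ t • M) :
    x ∈ Omega β (t ^ β * c) := by
  obtain ⟨hx₁, hx₂, hxlo⟩ := hx
  obtain ⟨-, hM₂, -, hMc⟩ := hM
  obtain ⟨hle₁, hle₂⟩ : x.1 ≤ t * M.1 ∧ x.2 ≤ t * M.2 := hxM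
  refine ⟨hx₁, hx₂, hxlo, ?_⟩
  calc x.1 * x.2 ^ (β - 1) ≤ (t * M.1) * (t * M.2) ^ (β - 1) := by
        gcongr
        linarith
    _ = t ^ β * (M.1 * M.2 ^ (β - 1)) := mul_mul_mul_rpow_sub_one ht hM₂.le
    _ ≤ t ^ β * c := by gcongr

theorem segment_subset_Omega {β c : ℝ} (hβ : 1 ≤ β) {A A' : ℝ × ℝ} (hA : A ∈ OmegaInf β)
    (hA' : A' ∈ OmegaInf β) (hM : (2⁻¹ : ℝ) • (A + A') ∈ Omega β c) :
    segment ℝ A A' ⊆ Omega β (2 ^ β * c) := by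
  have hnonneg {x : ℝ × ℝ} (hx : x ∈ OmegaInf β) : 0 ≤ x := ⟨hx.1.le, hx.2.1.le⟩
  have hsum : (2 : ℝ) • (2⁻¹ : ℝ) • (A + A') = A + A' := smul_inv_smul₀ two_ne_zero _
  have hseg : segment ℝ A A' ⊆ OmegaInf β ∩ Iic (A + A') :=
    ((convex_OmegaInf hβ).inter (convex_Iic _)).segment_subset
      ⟨hA, le_add_of_nonneg_right (hnonneg hA')⟩ ⟨hA', le_add_of_nonneg_left (hnonneg hA)⟩
  exact fun x hx => mem_Omega_of_le_smul hβ two_pos hM (hseg hx).1 ((hseg hx).2.trans_eq hsum.symm)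

theorem LocallyConcaveOn.midpoint_le {S : Set (ℝ × ℝ)} {B : ℝ × ℝ → ℝ}
    (hB : LocallyConcaveOn S B) {P Q : ℝ × ℝ} (hPQ : segment ℝ P Q ⊆ S) :
    2⁻¹ * (B P + B Q) ≤ B ((2⁻¹ : ℝ) • (P + Q)) := by
  have hconc := hB P Q (hPQ (left_mem_segment ℝ P Q)) (hPQ (right_mem_segment ℝ P Q)) hPQ
  have h := hconc.2 (left_mem_segment ℝ P Q) (right_mem_segment ℝ P Q)
    (by norm_num : (0 : ℝ) ≤ 2⁻¹) (by norm_num : (0 : ℝ) ≤ 2⁻¹) (by norm_num)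
  simpa only [smul_add, smul_eq_mul, mul_add] using h

section DyadicAverage

variable {E : Type*} [AddCommGroup E] [Module ℝ E]

def dyadicAvg (d : ℕ) (f : Fin (2 ^ d) → E) : E :=
  ((2 : ℝ) ^ d)⁻¹ • ∑ k, f k

theorem dyadicAvg_zero (f : Fin (2 ^ 0) → E) : dyadicAvg 0 f = f 0 := by
  simp [dyadicAvg]

theorem dyadicAvg_succ {d : ℕ} (f : Fin (2 ^ (d + 1)) → E) :
    dyadicAvg (d + 1) f = (2⁻¹ : ℝ) •
      (dyadicAvg d (fun i => f (finCongr (Nat.two_pow_succ d).symm (Fin.castAdd _ i))) +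
        dyadicAvg d (fun i => f (finCongr (Nat.two_pow_succ d).symm (Fin.natAdd _ i)))) := by
  rw [dyadicAvg, dyadicAvg, dyadicAvg, ← smul_add, smul_smul, ← mul_inv, ← pow_succ',
    ← (finCongr (Nat.two_pow_succ d).symm).sum_comp, Fin.sum_univ_add]

theorem dyadicAvg_mem {d : ℕ} {s : Set E} (hs : Convex ℝ s) {f : Fin (2 ^ d) → E}
    (hf : ∀ k, f k ∈ s) : dyadicAvg d f ∈ s := by
  rw [dyadicAvg, Finset.smul_sum]
  refine hs.sum_mem (fun _ _ => by positivity) ?_ fun k _ => hf k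
  simp

end DyadicAverage

theorem dyadicAvg_le_of_locallyConcaveOn {β : ℝ} (hβ : 1 ≤ β) {B : ℝ × ℝ → ℝ} (d : ℕ) :
    ∀ {c : ℝ} {P : Fin (2 ^ d) → ℝ × ℝ}, LocallyConcaveOn (Omega β (2 ^ (β * d) * c)) B →
      (∀ k, P k ∈ OmegaInf β) → dyadicAvg d P ∈ Omega β c →
      dyadicAvg d (fun k => B (P k)) ≤ B (dyadicAvg d P) := by
  induction d with
  | zero => intros; simp [dyadicAvg_zero]
  | succ d ih =>
    intro c P hB hP hM
    rw [dyadicAvg_succ P] at hM ⊢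
    rw [dyadicAvg_succ fun k => B (P k)]
    have hseg := segment_subset_Omega hβ (dyadicAvg_mem (convex_OmegaInf hβ) fun _ => hP _)
      (dyadicAvg_mem (convex_OmegaInf hβ) fun _ => hP _) hM
    have hdom : (2 : ℝ) ^ (β * ↑(d + 1)) * c = 2 ^ (β * d) * (2 ^ β * c) := by
      rw [Nat.cast_succ, mul_add_one, Real.rpow_add two_pos, mul_assoc]
    rw [hdom] at hB
    have hsub := Omega_subset_Omega_mul β (2 ^ β * c)
      (Real.one_le_rpow one_le_two (by positivity : 0 ≤ β * d))
    rw [smul_eq_mul]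
    grw [ih hB (fun _ => hP _) (hseg (left_mem_segment ..)),
      ih hB (fun _ => hP _) (hseg (right_mem_segment ..))]
    exact hB.midpoint_le (hseg.trans hsub)

theorem locally_concave_dyadic_average_general (β : ℝ) (hβ : 1 < β) (c : ℝ)
    (d : ℕ)
    (B : ℝ × ℝ → ℝ) (hB : LocallyConcaveOn (Omega β (2 ^ (β * d) * c)) B)
    (P : Fin (2 ^ d) → ℝ × ℝ) (hP : ∀ k, P k ∈ Omega β c)
    (havg : ((2 : ℝ) ^ d)⁻¹ • ∑ k, P k ∈ Omega β c) :
    B (((2 : ℝ) ^ d)⁻¹ • ∑ k, P k) ≥ ((2 : ℝ) ^ d)⁻¹ * ∑ k, B (P k) :=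
  dyadicAvg_le_of_locallyConcaveOn hβ.le d hB (fun k => Omega_subset_OmegaInf β c (hP k)) havg

theorem locally_concave_dyadic_average (β : ℝ) (hβ : 1 < β) (c : ℝ) (hc : 1 ≤ c)
    (d : ℕ) (hd : 1 ≤ d)
    (B : ℝ × ℝ → ℝ) (hB : LocallyConcaveOn (Omega β (2 ^ (β * d) * c)) B)
    (P : Fin (2 ^ d) → ℝ × ℝ) (hP : ∀ k, P k ∈ Omega β c)
    (havg : ((2 : ℝ) ^ d)⁻¹ • ∑ k, P k ∈ Omega β c) :
    B (((2 : ℝ) ^ d)⁻¹ • ∑ k, P k) ≥ ((2 : ℝ) ^ d)⁻¹ * ∑ k, B (P k) :=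
  locally_concave_dyadic_average_general β hβ c d B hB P hP havg

end
end

section
/- Let β ∈ (1,∞), c ≥ 1, d ≥ 1, and let s be the unique negative solution of (1−s)(1−s/β)^{−β} = 2^{−βd}/c. Then −2^{βd/(β−1)} β^{β/(β−1)} c^{1/(β−1)} ≤ s ≤ −β^{β/(β−1)} c^{1/(β−1)}. -/
/-!
Put `t = -s`. The equation for `s` says `(1 + t/β)^β / (1 + t) = 2^{βd} c`, and the left-hand side is
strictly increasing in `t ≥ 0` by Bernoulli's inequality, so it suffices to compare it with
`2^{βd} c` at the two claimed endpoints. At `x = β^{β/(β-1)} a^{1/(β-1)}` one has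
`(x/β)^β = a x`, which makes the left-hand side at least `a` and, when `x ≥ β`, at most `2^β a`;
take `a = 2^{βd} c` for the upper endpoint and `a = c` for the lower one.
-/

noncomputable section

open Real Set

namespace SDoubleBound

/-- The equation for `s` reads `ratio β (-s) = 2 ^ (β * d) * c`. -/
def ratio (β t : ℝ) : ℝ := (1 + t / β) ^ β / (1 + t)

def pivot (β a : ℝ) : ℝ := β ^ (β / (β - 1)) * a ^ (1 / (β - 1))

variable {β : ℝ}

theorem ratio_strictMonoOn (hβ : 1 < β) : StrictMonoOn (ratio β) (Ici 0) := by
  intro u (hu : 0 ≤ u) v (hv : 0 ≤ v) huv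
  have hβ0 : 0 < β := by linarith
  have hδ : (1 + v / β) / (1 + u / β) = 1 + (v - u) / (β + u) := by field_simp; ring
  have bernoulli : 1 + β * ((v - u) / (β + u)) < (1 + (v - u) / (β + u)) ^ β :=
    one_add_mul_self_lt_rpow_one_add (by rw [le_div_iff₀ (by linarith)]; linarith)
      (div_pos (by linarith) (by linarith)).ne' hβ
  have hlin : (1 + v) / (1 + u) ≤ 1 + β * ((v - u) / (β + u)) := by
    rw [div_le_iff₀ (by linarith), ← sub_nonneg]
    have hgap : (1 + β * ((v - u) / (β + u))) * (1 + u) - (1 + v)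
        = (β - 1) * u * (v - u) / (β + u) := by
      field_simp; ring
    rw [hgap]
    apply div_nonneg _ (by linarith); apply mul_nonneg (mul_nonneg _ hu) _ <;> linarith
  have hquot : (1 + v) / (1 + u) < (1 + v / β) ^ β / (1 + u / β) ^ β := by
    rw [← div_rpow (by positivity) (by positivity), hδ]; linarith
  unfold ratio
  rw [div_lt_div_iff₀ (by linarith) (by linarith)]
  rw [div_lt_div_iff₀ (by linarith) (by positivity)] at hquot
  linarith

theorem ratio_neg_eq_of_eq {s a : ℝ} (hβ : 0 < β) (hs : s ≤ 0)
    (h : (1 - s) * (1 - s / β) ^ (-β) = a⁻¹) : ratio β (-s) = a := by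
  rw [rpow_neg (by rw [sub_nonneg, div_le_one hβ]; linarith), ← div_eq_mul_inv] at h
  rw [ratio, ← inv_inv a, ← h, inv_div, neg_div]
  ring_nf

theorem pivot_nonneg (hβ : 0 < β) {a : ℝ} (ha : 0 ≤ a) : 0 ≤ pivot β a := by
  unfold pivot; positivity

theorem pivot_rpow_sub_one (hβ : 1 < β) {a : ℝ} (ha : 0 ≤ a) :
    pivot β a ^ (β - 1) = β ^ β * a := by
  have hβ1 : β - 1 ≠ 0 := by linarith
  rw [pivot, mul_rpow (by positivity) (by positivity), ← rpow_mul (by linarith),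
    ← rpow_mul ha, div_mul_cancel₀ _ hβ1, one_div_mul_cancel hβ1, rpow_one]

theorem pivot_div_rpow (hβ : 1 < β) {a : ℝ} (ha : 0 ≤ a) :
    (pivot β a / β) ^ β = a * pivot β a := by
  have hβ0 : 0 < β := by linarith
  have hx := pivot_nonneg hβ0 ha
  rcases hx.eq_or_lt with hx0 | hx0
  · rw [← hx0, zero_div, zero_rpow hβ0.ne', mul_zero]
  have hsplit : pivot β a ^ β = pivot β a ^ (β - 1) * pivot β a := by
    rw [← rpow_add_one hx0.ne', sub_add_cancel]
  rw [div_rpow hx hβ0.le, hsplit, pivot_rpow_sub_one hβ ha]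
  field_simp

theorem pivot_rpow_mul {b a : ℝ} (hb : 0 ≤ b) (ha : 0 ≤ a) (y : ℝ) :
    pivot β (b ^ y * a) = b ^ (y / (β - 1)) * pivot β a := by
  rw [pivot, pivot, mul_rpow (by positivity) ha, ← rpow_mul hb]
  ring_nf

theorem le_ratio_pivot (hβ : 1 < β) {a : ℝ} (ha : 0 ≤ a) : a ≤ ratio β (pivot β a) := by
  have hβ0 : 0 < β := by linarith
  set x := pivot β a
  have hx : 0 ≤ x := pivot_nonneg hβ0 ha
  have hstep : (1 + x) / β ≤ 1 + x / β := by
    rw [div_le_iff₀ hβ0, add_mul, div_mul_cancel₀ _ hβ0.ne']; linarith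
  have hgrow : x ^ (β - 1) ≤ (1 + x) ^ (β - 1) :=
    rpow_le_rpow hx (by linarith) (by linarith)
  rw [ratio, le_div_iff₀ (by linarith)]
  calc a * (1 + x) = x ^ (β - 1) * (1 + x) / β ^ β := by
        rw [pivot_rpow_sub_one hβ ha]; field_simp
    _ ≤ (1 + x) ^ (β - 1) * (1 + x) / β ^ β := by gcongr
    _ = ((1 + x) / β) ^ β := by
        rw [div_rpow (by linarith) hβ0.le, ← rpow_add_one (by linarith), sub_add_cancel]
    _ ≤ (1 + x / β) ^ β := rpow_le_rpow (by positivity) hstep hβ0.le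

theorem ratio_pivot_le (hβ : 1 < β) {a : ℝ} (ha : 1 ≤ a) : ratio β (pivot β a) ≤ 2 ^ β * a := by
  have hβ0 : 0 < β := by linarith
  set x := pivot β a
  have hβx : β ≤ x := by
    calc β ≤ β ^ (β / (β - 1)) :=
          self_le_rpow_of_one_le hβ.le (by rw [le_div_iff₀ (by linarith)]; linarith)
      _ ≤ x := le_mul_of_one_le_right (by positivity) (one_le_rpow ha (one_div_nonneg.mpr (by linarith)))
  rw [ratio, div_le_iff₀ (by linarith)]
  have hxβ : 1 ≤ x / β := (one_le_div hβ0).mpr hβx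
  calc (1 + x / β) ^ β ≤ (2 * (x / β)) ^ β := rpow_le_rpow (by linarith) (by linarith) hβ0.le
    _ = 2 ^ β * a * x := by
        rw [mul_rpow (by norm_num) (by linarith), pivot_div_rpow hβ (by linarith)]; ring
    _ ≤ 2 ^ β * a * (1 + x) := by gcongr; linarith

end SDoubleBound

open SDoubleBound in
theorem s_double_bound (β : ℝ) (hβ : 1 < β) (c : ℝ) (hc : 1 ≤ c) (d : ℕ) (hd : 1 ≤ d)
    (s : ℝ) (hs : s < 0) (hseq : (1 - s) * (1 - s / β) ^ (-β) = 2 ^ (-(β * d)) / c) :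
    -2 ^ (β * d / (β - 1)) * β ^ (β / (β - 1)) * c ^ (1 / (β - 1)) ≤ s ∧
      s ≤ -β ^ (β / (β - 1)) * c ^ (1 / (β - 1)) := by
  have hβ0 : 0 < β := by linarith
  have hc0 : 0 ≤ c := by linarith
  have hK : 0 ≤ 2 ^ (β * d) * c := by positivity
  have ht : ratio β (-s) = 2 ^ (β * d) * c := by
    apply ratio_neg_eq_of_eq hβ0 hs.le
    rw [hseq, rpow_neg (by norm_num), div_eq_mul_inv, mul_inv]
  have hgrowth : 2 ^ β * c ≤ 2 ^ (β * d) * c := by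
    gcongr
    · norm_num
    · exact le_mul_of_one_le_right hβ0.le (by exact_mod_cast hd)
  have hmono := ratio_strictMonoOn hβ
  have hupper : -s ≤ pivot β (2 ^ (β * d) * c) :=
    (hmono.le_iff_le (show 0 ≤ -s by linarith) (pivot_nonneg hβ0 hK)).mp
      (ht.trans_le (le_ratio_pivot hβ hK))
  have hlower : pivot β c ≤ -s :=
    (hmono.le_iff_le (pivot_nonneg hβ0 hc0) (show 0 ≤ -s by linarith)).mp
      ((ratio_pivot_le hβ hc).trans (hgrowth.trans ht.ge))
  rw [pivot_rpow_mul (by norm_num) hc0] at hupper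
  unfold pivot at hupper hlower
  constructor <;> linarith
end
end

section
/- Let β ∈ (1,∞), d ≥ 1, c ≥ 1, and let s be the unique negative solution of (1−s)(1−s/β)^{−β} = 2^{−βd}/c. Then the number r = β(1 + 2^{βd/(β−1)} β^{β/(β−1)} c^{1/(β−1)}) / (β + 2^{βd/(β−1)} β^{β/(β−1)} c^{1/(β−1)}) satisfies β(1−s)/(β−s) < r < β; equivalently, s > −2^{βd/(β−1)+1} β^{β/(β−1)} c^{1/(β−1)}. -/
noncomputable section

open Real Set

/-!
With `t = -s > 0`, Bernoulli's inequality `(1 + β/t)^β ≥ 1 + β²/t` gives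
`(1 + t)(1 + t/β)^(-β) < β^β t^(1-β)`. The right-hand side decreases in `t` and equals `2^(-βd)/c`
at `t = K := 2^(βd/(β-1)) β^(β/(β-1)) c^(1/(β-1))`, so `-s < K`. Both `β(1-s)/(β-s)` and `r` are
values of `x ↦ β(1+x)/(β+x)`, at `-s` and at `K`; this map is strictly increasing and below `β`
on `x > -β` because `β > 1`.
-/

lemma one_sub_mul_one_sub_div_rpow_neg_lt {β s : ℝ} (hβ : 1 < β) (hs : s < 0) :
    (1 - s) * (1 - s / β) ^ (-β) < β ^ β * (-s) ^ (1 - β) := by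
  set t := -s
  have hβ0 : 0 < β := by linarith
  have ht : 0 < t := by linarith
  have hβt : 0 < 1 + β / t := by positivity
  have hbern : t + β ^ 2 ≤ t * (1 + β / t) ^ β := by
    have h := one_add_mul_self_le_rpow_one_add
      (by linarith [div_pos hβ0 ht] : (-1 : ℝ) ≤ β / t) hβ.le
    calc t + β ^ 2 = t * (1 + β * (β / t)) := by field_simp
      _ ≤ t * (1 + β / t) ^ β := by gcongr
  have hcore : (1 + t) * (1 + β / t) ^ (-β) < t := by
    rw [rpow_neg hβt.le, mul_inv_lt_iff₀ (by positivity)]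
    nlinarith
  calc (1 - s) * (1 - s / β) ^ (-β)
      = (t / β) ^ (-β) * ((1 + t) * (1 + β / t) ^ (-β)) := by
        rw [show 1 - s / β = t / β * (1 + β / t) by field_simp; ring,
          mul_rpow (by positivity) hβt.le, sub_eq_add_neg]
        ring
    _ < (t / β) ^ (-β) * t := by gcongr
    _ = β ^ β * t ^ (1 - β) := by
        rw [div_rpow ht.le hβ0.le, rpow_neg ht.le, rpow_neg hβ0.le, sub_eq_add_neg,
          rpow_add ht, rpow_one, rpow_neg ht.le]
        field_simp

lemma neg_lt_of_one_sub_mul_one_sub_div_rpow_neg_eq {β s K : ℝ} (hβ : 1 < β) (hK : 0 < K)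
    (hseq : (1 - s) * (1 - s / β) ^ (-β) = β ^ β * K ^ (1 - β)) : -K < s := by
  by_contra! hsK
  have hs : s < 0 := by linarith
  have hmono : (-s) ^ (1 - β) ≤ K ^ (1 - β) :=
    rpow_le_rpow_of_nonpos hK (by linarith) (by linarith)
  have := one_sub_mul_one_sub_div_rpow_neg_lt hβ hs
  have : 0 < β ^ β := by positivity
  nlinarith

lemma rpow_one_div_sub_one_rpow_one_sub {a β : ℝ} (ha : 0 ≤ a) (hβ : β ≠ 1) :
    (a ^ (1 / (β - 1))) ^ (1 - β) = a⁻¹ := by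
  rw [← rpow_mul ha, show 1 / (β - 1) * (1 - β) = -1 by field_simp [sub_ne_zero.mpr hβ]; ring,
    rpow_neg_one]

lemma strictMonoOn_mul_one_add_div_add {β : ℝ} (hβ : 1 < β) :
    StrictMonoOn (fun x => β * (1 + x) / (β + x)) (Ioi (-β)) := by
  intro x hx y hy hxy
  simp only [mem_Ioi] at hx hy
  rw [div_lt_div_iff₀ (by linarith) (by linarith)]
  nlinarith [mul_pos (by linarith : 0 < β - 1) (by linarith : 0 < y - x)]

lemma mul_one_add_div_add_lt {β x : ℝ} (hβ : 1 < β) (hx : -β < x) :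
    β * (1 + x) / (β + x) < β := by
  rw [div_lt_iff₀ (by linarith)]
  nlinarith

theorem r_in_admissible_range_general (β : ℝ) (hβ : 1 < β) (d : ℕ) (c : ℝ) (hc : 1 ≤ c)
    (s : ℝ) (hs : s < 0) (hseq : (1 - s) * (1 - s / β) ^ (-β) = 2 ^ (-(β * d)) / c)
    (r : ℝ)
    (hr : r = β * (1 + 2 ^ (β * d / (β - 1)) * β ^ (β / (β - 1)) * c ^ (1 / (β - 1))) /
          (β + 2 ^ (β * d / (β - 1)) * β ^ (β / (β - 1)) * c ^ (1 / (β - 1)))) :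
    (β * (1 - s) / (β - s) < r ∧ r < β) ∧
      s > -2 ^ (β * d / (β - 1) + 1) * β ^ (β / (β - 1)) * c ^ (1 / (β - 1)) := by
  have hβ0 : 0 < β := by linarith
  have hc0 : 0 < c := by linarith
  set A : ℝ := 2 ^ (β * d) * β ^ β * c
  set K : ℝ := 2 ^ (β * d / (β - 1)) * β ^ (β / (β - 1)) * c ^ (1 / (β - 1)) with hK_def
  have hK0 : 0 < K := by positivity
  have hKA : K = A ^ (1 / (β - 1)) := by
    rw [hK_def, mul_rpow (by positivity) hc0.le, mul_rpow (by positivity) (by positivity),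
      ← rpow_mul zero_le_two, ← rpow_mul hβ0.le, mul_one_div, mul_one_div]
  have hsK : -K < s := by
    refine neg_lt_of_one_sub_mul_one_sub_div_rpow_neg_eq hβ hK0 ?_
    rw [hseq, hKA, rpow_one_div_sub_one_rpow_one_sub (by positivity) hβ.ne', rpow_neg zero_le_two]
    field_simp [A]
    ring
  have hmono := strictMonoOn_mul_one_add_div_add hβ (a := -s) (b := K)
    (by simp only [mem_Ioi]; linarith) (by simp only [mem_Ioi]; linarith) (by linarith)
  simp only [← sub_eq_add_neg] at hmono
  refine ⟨⟨hr ▸ hmono, hr ▸ mul_one_add_div_add_lt hβ (by linarith)⟩, ?_⟩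
  rw [rpow_add two_pos, rpow_one]
  linarith

theorem r_in_admissible_range (β : ℝ) (hβ : 1 < β) (d : ℕ) (hd : 1 ≤ d) (c : ℝ) (hc : 1 ≤ c)
    (s : ℝ) (hs : s < 0) (hseq : (1 - s) * (1 - s / β) ^ (-β) = 2 ^ (-(β * d)) / c)
    (r : ℝ)
    (hr : r = β * (1 + 2 ^ (β * d / (β - 1)) * β ^ (β / (β - 1)) * c ^ (1 / (β - 1))) /
          (β + 2 ^ (β * d / (β - 1)) * β ^ (β / (β - 1)) * c ^ (1 / (β - 1)))) :
    (β * (1 - s) / (β - s) < r ∧ r < β) ∧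
      s > -2 ^ (β * d / (β - 1) + 1) * β ^ (β / (β - 1)) * c ^ (1 / (β - 1)) :=
  r_in_admissible_range_general β hβ d c hc s hs hseq r hr
end
end

section
/- Let d ≥ 1, 0 < α < d, 1 < p, 1/q = 1/p − α/d, p' = p/(p−1), r ∈ (1, q/p'+1), c ≥ 1, L > 0, and set s = q − rq²/((r−1)(q−p)+pq) and t = rpq/((r−1)(q−p)+pq). Then for all x ≥ 0, y ≥ 0, w > 0 and v > 0 with 1 ≤ w v^{r−1} ≤ c, y^q w − (q/s) L^{q−s−t} c x^t y^s v^{1−t} ≥ ((q−s)/q) [ y^q w − (q/s)^{q/(q−s)} L^{q(q−s−t)/(q−s)} c^{q/(q−s)} (x w^{1/q})^p ]. -/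
/-!
With `G = (q/s) L^(q-s-t) c`, the inequality rearranges to
`G xᵗ yˢ v^(1-t) ≤ (s/q) yᵠ w + ((q-s)/q) G^(q/(q-s)) xᵖ w^(p/q)`.
Since `1 - t = (1 - r)(s + t)/q`, the lower bound `1 ≤ w v^(r-1)` gives `v^(1-t) ≤ w^((s+t)/q)`; and since
`t = p (q - s)/q`, the resulting product `G xᵗ yˢ w^((s+t)/q)` is the weighted geometric mean
`(yᵠ w)^(s/q) (G^(q/(q-s)) xᵖ w^(p/q))^((q-s)/q)`, which weighted AM-GM bounds by the right-hand side.
-/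

open Real Set

lemma pos_and_mul_lt_of_mem_Ioo {p q r : ℝ} (hp : 1 < p) (hr : r ∈ Ioo 1 (q / (p / (p - 1)) + 1)) :
    0 < q ∧ r * q < (r - 1) * (q - p) + p * q := by
  obtain ⟨hr1, hr2⟩ := hr
  have hp1 : 0 < p - 1 := sub_pos.mpr hp
  have hrp : (r - 1) * p < q * (p - 1) := by
    rw [div_div_eq_mul_div] at hr2
    exact (lt_div_iff₀ (by linarith)).mp (by linarith)
  constructor <;> nlinarith [mul_pos (sub_pos.mpr hr1) (by linarith : (0 : ℝ) < p)]

lemma bellman_exponents {p q r s t : ℝ} (hp : 1 < p) (hr : r ∈ Ioo 1 (q / (p / (p - 1)) + 1))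
    (hs : s = q - r * q ^ 2 / ((r - 1) * (q - p) + p * q))
    (ht : t = r * p * q / ((r - 1) * (q - p) + p * q)) :
    0 < s ∧ s < q ∧ t = p * ((q - s) / q) ∧ 1 - t = (1 - r) * ((s + t) / q) := by
  obtain ⟨hq, hD⟩ := pos_and_mul_lt_of_mem_Ioo hp hr
  have hr0 : 0 < r := by linarith [hr.1]
  have hD0 : 0 < (r - 1) * (q - p) + p * q := by nlinarith
  refine ⟨?_, ?_, ?_, ?_⟩
  · rw [hs, sub_pos, div_lt_iff₀ hD0]
    nlinarith
  · rw [hs]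
    linarith [show 0 < r * q ^ 2 / ((r - 1) * (q - p) + p * q) by positivity]
  · rw [ht, hs]
    field_simp
    ring
  · rw [ht, hs]
    field_simp
    ring

lemma rpow_mul_le_rpow_of_one_le_mul_rpow {v w r e : ℝ} (hv : 0 < v) (he : 0 ≤ e)
    (h : 1 ≤ w * v ^ (r - 1)) : v ^ ((1 - r) * e) ≤ w ^ e := by
  have hvw : v ^ (1 - r) ≤ w := by
    rw [show 1 - r = -(r - 1) by ring, rpow_neg hv.le, ← one_div,
      div_le_iff₀ (rpow_pos_of_pos hv _)]
    exact h
  rw [rpow_mul hv.le]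
  exact rpow_le_rpow (rpow_nonneg hv.le _) hvw he

lemma mul_rpow_le_weighted_young {p q s t G x y w : ℝ} (hs : 0 < s) (hsq : s < q)
    (ht : t = p * ((q - s) / q)) (hG : 0 ≤ G) (hx : 0 ≤ x) (hy : 0 ≤ y) (hw : 0 < w) :
    G * x ^ t * y ^ s * w ^ ((s + t) / q) ≤
      s / q * (y ^ q * w) + (q - s) / q * (G ^ (q / (q - s)) * (x * w ^ (1 / q)) ^ p) := by
  have hq : 0 < q := hs.trans hsq
  have hqs : 0 < q - s := sub_pos.mpr hsq
  have hyw : (y ^ q * w) ^ (s / q) = y ^ s * w ^ (s / q) := by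
    rw [mul_rpow (rpow_nonneg hy _) hw.le, ← rpow_mul hy]
    field_simp
  have hGxw : (G ^ (q / (q - s)) * (x * w ^ (1 / q)) ^ p) ^ ((q - s) / q) =
      G * x ^ t * w ^ (t / q) := by
    rw [mul_rpow hx (rpow_nonneg hw.le _), ← rpow_mul hw.le,
      mul_rpow (rpow_nonneg hG _) (by positivity), ← rpow_mul hG,
      mul_rpow (rpow_nonneg hx _) (rpow_nonneg hw.le _), ← rpow_mul hx, ← rpow_mul hw.le,
      show q / (q - s) * ((q - s) / q) = 1 by field_simp, rpow_one, ← ht,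
      show 1 / q * p * ((q - s) / q) = t / q by rw [ht]; ring, mul_assoc]
  have hmean : G * x ^ t * y ^ s * w ^ ((s + t) / q) =
      (y ^ q * w) ^ (s / q) * (G ^ (q / (q - s)) * (x * w ^ (1 / q)) ^ p) ^ ((q - s) / q) := by
    rw [hyw, hGxw, add_div, rpow_add hw]
    ring
  rw [hmean]
  exact geom_mean_le_arith_mean2_weighted (by positivity) (by positivity)
    (by positivity) (by positivity) (by field_simp; ring)

theorem bellman_majorization_general
    (p q : ℝ) (hp : 1 < p)
    (r : ℝ) (hr : r ∈ Set.Ioo 1 (q / (p / (p - 1)) + 1))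
    (c : ℝ) (hc : 1 ≤ c) (L : ℝ) (hL : 0 < L)
    (s t : ℝ)
    (hs : s = q - r * q ^ 2 / ((r - 1) * (q - p) + p * q))
    (ht : t = r * p * q / ((r - 1) * (q - p) + p * q))
    (x y w v : ℝ) (hx : 0 ≤ x) (hy : 0 ≤ y)
    (hw : 0 < w) (hv : 0 < v) (hwv1 : 1 ≤ w * v ^ (r - 1)) :
    y ^ q * w - q / s * L ^ (q - s - t) * c * x ^ t * y ^ s * v ^ (1 - t) ≥
      (q - s) / q *
        (y ^ q * w - (q / s) ^ (q / (q - s)) * L ^ (q * (q - s - t) / (q - s)) *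
          c ^ (q / (q - s)) * (x * w ^ (1 / q)) ^ p) := by
  obtain ⟨hs0, hsq, htp, h1t⟩ := bellman_exponents hp hr hs ht
  have hq : 0 < q := hs0.trans hsq
  have ht0 : 0 ≤ t := htp ▸ mul_nonneg (by linarith) (div_nonneg (by linarith) hq.le)
  have hG : 0 ≤ q / s * L ^ (q - s - t) * c := by positivity
  have hcoeff : (q / s) ^ (q / (q - s)) * L ^ (q * (q - s - t) / (q - s)) * c ^ (q / (q - s)) =
      (q / s * L ^ (q - s - t) * c) ^ (q / (q - s)) := by
    rw [mul_rpow (by positivity) (by positivity), mul_rpow (by positivity) (by positivity),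
      ← rpow_mul hL.le]
    congr 3
    ring
  have hv_le : v ^ (1 - t) ≤ w ^ ((s + t) / q) := by
    rw [h1t]
    exact rpow_mul_le_rpow_of_one_le_mul_rpow hv (div_nonneg (by linarith) hq.le) hwv1
  have hyoung := mul_rpow_le_weighted_young hs0 hsq htp hG hx hy hw
  have hweights : (q - s) / q = 1 - s / q := by field_simp
  have hmono := mul_le_mul_of_nonneg_left hv_le
    (by positivity : 0 ≤ q / s * L ^ (q - s - t) * c * x ^ t * y ^ s)
  rw [hcoeff, ge_iff_le]
  linear_combination hyoung + hmono + y ^ q * w * hweights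

theorem bellman_majorization
    (d : ℕ) (hd : 1 ≤ d) (α p q : ℝ) (hα : 0 < α) (hαd : α < (d : ℝ)) (hp : 1 < p)
    (hq : 1 / q = 1 / p - α / (d : ℝ))
    (r : ℝ) (hr : r ∈ Set.Ioo 1 (q / (p / (p - 1)) + 1))
    (c : ℝ) (hc : 1 ≤ c) (L : ℝ) (hL : 0 < L)
    (s t : ℝ)
    (hs : s = q - r * q ^ 2 / ((r - 1) * (q - p) + p * q))
    (ht : t = r * p * q / ((r - 1) * (q - p) + p * q))
    (x y w v : ℝ) (hx : 0 ≤ x) (hy : 0 ≤ y)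
    (hw : 0 < w) (hv : 0 < v) (hwv1 : 1 ≤ w * v ^ (r - 1)) (hwvc : w * v ^ (r - 1) ≤ c) :
    y ^ q * w - q / s * L ^ (q - s - t) * c * x ^ t * y ^ s * v ^ (1 - t) ≥
      (q - s) / q *
        (y ^ q * w - (q / s) ^ (q / (q - s)) * L ^ (q * (q - s - t) / (q - s)) *
          c ^ (q / (q - s)) * (x * w ^ (1 / q)) ^ p) :=
  bellman_majorization_general p q hp r hr c hc L hL s t hs ht x y w v hx hy hw hv hwv1
end
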